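/- Fix p_0 ∈ 𝒫 and let τ_0 > 0 be the unique point at which the function τ ↦ λ(γ_{p_0}(τ)) = 1 − Σ_i √(τ² + 4 p_i²) + (n−1)τ attains its maximum on (0,∞). Then there exists a unique r_0 ∈ ℛ such that H(r_0, δ(r_0)/2) = γ_{p_0}(τ_0). -/

import Mathlib

open Filter

namespace Cogrowth

noncomputable section

/-- Weighted length of a free group element given edge-length parameter `r`. -/
def wlen {n : ℕ} (r : Fin n → ℝ) (g : FreeGroup (Fin n)) : ℝ :=
  ((FreeGroup.toWord g).map fun l => - Real.log (r l.1)).sum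

/-- Poincaré exponent of a subgroup `G` with respect to the weighted length `wlen r`. -/
def pexp {n : ℕ} (r : Fin n → ℝ) (G : Subgroup (FreeGroup (Fin n))) : ℝ :=
  limsup (fun R : ℝ =>
    Real.log (Nat.card {g : FreeGroup (Fin n) // g ∈ G ∧ wlen r g ≤ R}) / R) atTop

/-- Poincaré exponent of the full free group. -/
def delta {n : ℕ} (r : Fin n → ℝ) : ℝ := pexp r ⊤

/-- Poincaré exponent with respect to the word metric. -/
def wordexp {n : ℕ} (G : Subgroup (FreeGroup (Fin n))) : ℝ :=
  limsup (fun R : ℝ =>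
    Real.log (Nat.card {g : FreeGroup (Fin n) // g ∈ G ∧ ((FreeGroup.toWord g).length : ℝ) ≤ R}) / R) atTop

/-- The space of left cosets `Gx`. -/
abbrev Cosets {n : ℕ} (G : Subgroup (FreeGroup (Fin n))) := Quotient (QuotientGroup.rightRel G)

/-- Right multiplication on cosets: `Gx ↦ Gxa`. -/
def rmul {n : ℕ} (G : Subgroup (FreeGroup (Fin n))) (a : FreeGroup (Fin n)) (x : Cosets G) :
    Cosets G :=
  Quotient.map (· * a) (fun x y h => by
    have h' : y * x⁻¹ ∈ G := QuotientGroup.rightRel_apply.mp h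
    exact QuotientGroup.rightRel_apply.mpr (by simpa [mul_inv_rev, mul_assoc] using h')) x

/-- The weighted transition operator `A_p` on functions on `G\F_n` (pointwise formula). -/
def Aq {n : ℕ} (G : Subgroup (FreeGroup (Fin n))) (p : Fin n → ℝ) (f : Cosets G → ℝ)
    (x : Cosets G) : ℝ :=
  ∑ i, p i * (f (rmul G (FreeGroup.of i) x) + f (rmul G (FreeGroup.of i)⁻¹ x))

/-- Bottom of the spectrum of `Δ_p = I - A_p` on `ℓ²(G\F_n)`. -/
def lambda0 {n : ℕ} (G : Subgroup (FreeGroup (Fin n))) (p : Fin n → ℝ) : ℝ :=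
  sInf { L : ℝ | ∃ f : Cosets G → ℝ, Memℓp f 2 ∧ (∑' x, f x ^ 2) = 1 ∧
    L = ∑' x, (f x - Aq G p f x) * f x }

/-- The weighted transition operator `A_p` on functions on `F_n`. -/
def Afree {n : ℕ} (p : Fin n → ℝ) (f : FreeGroup (Fin n) → ℝ) (x : FreeGroup (Fin n)) : ℝ :=
  ∑ i, p i * (f (x * FreeGroup.of i) + f (x * (FreeGroup.of i)⁻¹))

/-- Bottom of the spectrum of `Δ_p = I - A_p` on `ℓ²(F_n)`. -/
def lambda0F {n : ℕ} (p : Fin n → ℝ) : ℝ :=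
  sInf { L : ℝ | ∃ f : FreeGroup (Fin n) → ℝ, Memℓp f 2 ∧ (∑' x, f x ^ 2) = 1 ∧
    L = ∑' x, (f x - Afree p f x) * f x }

/-- Spectral radius of `A_p` on `ℓ²(F_n)`. -/
def rhoF {n : ℕ} (p : Fin n → ℝ) : ℝ :=
  sSup { L : ℝ | ∃ f : FreeGroup (Fin n) → ℝ, Memℓp f 2 ∧ (∑' x, f x ^ 2) = 1 ∧
    L = ∑' x, Afree p f x * f x }

/-- `D(u) = Σ_j ∏_{k≠j} (u_k⁻¹ - u_k)`. -/
def Dfun {n : ℕ} (u : Fin n → ℝ) : ℝ :=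
  ∑ j, ∏ k ∈ Finset.univ.erase j, ((u k)⁻¹ - u k)

/-- The weight `p(u)` determined by `u`. -/
def pfun {n : ℕ} (u : Fin n → ℝ) (i : Fin n) : ℝ :=
  (∏ k ∈ Finset.univ.erase i, ((u k)⁻¹ - u k)) / (2 * Dfun u)

/-- The common eigenvalue `λ(u)`. -/
def lamfun {n : ℕ} (u : Fin n → ℝ) : ℝ :=
  (Dfun u)⁻¹ * ((∑ j, (1 - u j) * ∏ k ∈ Finset.univ.erase j, ((u k)⁻¹ - u k)) -
    (1 / 2) * ∏ l, ((u l)⁻¹ - u l))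

/-- `l(u) = 2 Σ_j u_j ∏_{k≠j}(1+u_k) - ∏_ℓ (1+u_ℓ)`. -/
def lfun {n : ℕ} (u : Fin n → ℝ) : ℝ :=
  2 * ∑ j, u j * ∏ k ∈ Finset.univ.erase j, (1 + u k) - ∏ l, (1 + u l)

/-- `c_i(u,p) = 1 - 2 Σ_k u_k p_k - (u_i⁻¹ - u_i) p_i`. -/
def cfun {n : ℕ} (u p : Fin n → ℝ) (i : Fin n) : ℝ :=
  1 - 2 * ∑ k, u k * p k - ((u i)⁻¹ - u i) * p i

/-- `H(r,s) = (r_1^s, …, r_n^s)`. -/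
def Hmap {n : ℕ} (r : Fin n → ℝ) (s : ℝ) : Fin n → ℝ := fun i => r i ^ s

/-- The curve `γ_p(τ)`, the solution `u_i ∈ (0,1)` of `(u⁻¹ - u) p_i = τ`. -/
def gam {n : ℕ} (p : Fin n → ℝ) (τ : ℝ) : Fin n → ℝ := fun i =>
  (Real.sqrt (τ ^ 2 * ((p i)⁻¹) ^ 2 + 4) - τ * (p i)⁻¹) / 2

end

end Cogrowth

open Finset Real Filter Topology

/-!
For weights `x_i = r_i ^ s`, the truncated Poincaré sums `W_k = ∑_{|g| ≤ k} exp (-s ℓ_r(g))`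
split according to the first letter `a` of the reduced word, and the first-letter sums satisfy
`h_{k+1}(a) = x_a (W_k - h_k(a))`. If `T = ∑ x_i / (1 + x_i) < 1/2` this recursion has a positive
fixed point that bounds every `W_k`; if `T ≥ 1/2`, then `W_{k+1} ≥ W_k + 1`. Comparing with ball
sizes (an Abel summation for the lower bound), `δ(r)` is the unique `σ` with
`∑ r_i^σ / (1 + r_i^σ) = 1/2`.

At the maximum `τ₀` the first-order condition says `∑ u_i² / (1 + u_i²) = 1/2` for
`u = γ_p(τ₀)`. So `r = u^c`, with `c` chosen so that `∑ u_i^c = 1/2`, has `δ(r) = 2/c` and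
`H(r, δ(r)/2) = u`. Conversely `H(r, s) = u` forces `r = u^(1/s)`, and the normalisation
`∑ r_i = 1/2` pins down the exponent.
-/

namespace Cogrowth

noncomputable section WordSums

variable {α : Type*}

theorem isReduced_cons_iff {a : α × Bool} {w : List (α × Bool)} :
    FreeGroup.IsReduced (a :: w) ↔ w.head? ≠ some (a.1, !a.2) ∧ FreeGroup.IsReduced w := by
  rw [FreeGroup.IsReduced, List.isChain_cons]
  refine and_congr_left' ⟨fun h hw => ?_, fun h b hb hab => ?_⟩
  · simpa using h _ hw
  · obtain ⟨a1, a2⟩ := a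
    obtain ⟨b1, b2⟩ := b
    simp only [Option.mem_def] at hb hab
    subst hab
    cases a2 <;> cases b2 <;> simp_all

def weight (x : α → ℝ) (w : List (α × Bool)) : ℝ := (w.map fun l : α × Bool => x l.1).prod

theorem weight_nonneg {x : α → ℝ} (hx : ∀ i, 0 ≤ x i) (w : List (α × Bool)) :
    0 ≤ weight x w :=
  List.prod_nonneg fun _ hy => by
    obtain ⟨l, -, rfl⟩ := List.mem_map.1 hy
    exact hx l.1

variable [Fintype α]

theorem sum_comp_fst (f : α → ℝ) : ∑ a : α × Bool, f a.1 = 2 * ∑ i, f i := by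
  simp [Fintype.sum_prod_type, mul_sum, two_mul]

variable (α) in
def reducedWords (k : ℕ) : Finset (List (α × Bool)) :=
  Set.Finite.toFinset (s := {w | w.length ≤ k ∧ FreeGroup.IsReduced w})
    ((List.finite_length_le (α × Bool) k).subset fun _ hw => hw.1)

theorem mem_reducedWords {k : ℕ} {w : List (α × Bool)} :
    w ∈ reducedWords α k ↔ w.length ≤ k ∧ FreeGroup.IsReduced w :=
  Set.Finite.mem_toFinset _

variable [DecidableEq α]

def wordSum (x : α → ℝ) (k : ℕ) : ℝ := ∑ w ∈ reducedWords α k, weight x w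

def headSum (x : α → ℝ) (k : ℕ) (a : α × Bool) : ℝ :=
  ∑ w ∈ reducedWords α k with w.head? = some a, weight x w

theorem wordSum_eq_one_add_sum_headSum (x : α → ℝ) (k : ℕ) :
    wordSum x k = 1 + ∑ a, headSum x k a := by
  have hnil : {w ∈ reducedWords α k | w.head? = none} = {[]} := by
    ext w
    cases w <;> simp [mem_reducedWords]
  rw [wordSum, ← sum_fiberwise _ List.head?, Fintype.sum_option, hnil, sum_singleton]
  rfl

theorem reducedWords_head_succ (k : ℕ) (a : α × Bool) :
    {w ∈ reducedWords α (k + 1) | w.head? = some a} =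
      {w ∈ reducedWords α k | w.head? ≠ some (a.1, !a.2)}.image (a :: ·) := by
  ext w
  simp only [mem_filter, mem_image, mem_reducedWords]
  constructor
  · rintro ⟨⟨hlen, hred⟩, hhead⟩
    obtain ⟨v, rfl⟩ : ∃ v, w = a :: v := by
      cases w <;> simp_all
    rw [isReduced_cons_iff] at hred
    exact ⟨v, ⟨⟨by simpa using hlen, hred.2⟩, hred.1⟩, rfl⟩
  · rintro ⟨v, ⟨⟨hlen, hred⟩, hhead⟩, rfl⟩
    exact ⟨⟨by simpa using hlen, isReduced_cons_iff.2 ⟨hhead, hred⟩⟩, rfl⟩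

theorem headSum_succ' (x : α → ℝ) (k : ℕ) (a : α × Bool) :
    headSum x (k + 1) a = x a.1 * (wordSum x k - headSum x k (a.1, !a.2)) := by
  have hrest : ∑ w ∈ reducedWords α k with w.head? ≠ some (a.1, !a.2), weight x w =
      wordSum x k - headSum x k (a.1, !a.2) := by
    rw [eq_sub_iff_add_eq, add_comm]
    exact sum_filter_add_sum_filter_not _ _ _
  rw [headSum, reducedWords_head_succ, sum_image (fun _ _ _ _ h => List.cons_injective h),
    ← hrest, mul_sum]
  simp [weight]

theorem headSum_zero (x : α → ℝ) (a : α × Bool) : headSum x 0 a = 0 := by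
  refine sum_eq_zero fun w hw => ?_
  obtain ⟨⟨hlen, -⟩, hhead⟩ := by simpa only [mem_filter, mem_reducedWords] using hw
  simp [List.eq_nil_of_length_eq_zero (Nat.le_zero.1 hlen)] at hhead

theorem headSum_flip (x : α → ℝ) (k : ℕ) (a : α × Bool) :
    headSum x k (a.1, !a.2) = headSum x k a := by
  induction k generalizing a with
  | zero => simp [headSum_zero]
  | succ k ih => rw [headSum_succ', headSum_succ', ih]

theorem headSum_succ (x : α → ℝ) (k : ℕ) (a : α × Bool) :
    headSum x (k + 1) a = x a.1 * (wordSum x k - headSum x k a) := by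
  rw [headSum_succ', headSum_flip]

theorem headSum_le_headSum_succ {x : α → ℝ} (hx : ∀ i, 0 ≤ x i) (k : ℕ) (a : α × Bool) :
    headSum x k a ≤ headSum x (k + 1) a := by
  refine sum_le_sum_of_subset_of_nonneg (fun w hw => ?_) fun w _ _ => weight_nonneg hx w
  simp only [mem_filter, mem_reducedWords] at hw ⊢
  exact ⟨⟨hw.1.1.trans k.le_succ, hw.1.2⟩, hw.2⟩

theorem wordSum_le {x : α → ℝ} (hx : ∀ i, 0 ≤ x i) (hT : ∑ i, x i / (1 + x i) < 1 / 2)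
    (k : ℕ) : wordSum x k ≤ (1 - 2 * ∑ i, x i / (1 + x i))⁻¹ := by
  set T := ∑ i, x i / (1 + x i)
  have hT0 : 0 < 1 - 2 * T := by linarith
  -- the fixed point of the recursion `headSum_succ`
  set Y : α × Bool → ℝ := fun a => x a.1 / (1 + x a.1) * (1 - 2 * T)⁻¹
  have hY : ∑ a, Y a = 2 * T * (1 - 2 * T)⁻¹ := by
    rw [sum_comp_fst (fun i => x i / (1 + x i) * (1 - 2 * T)⁻¹), ← sum_mul]; ring
  have hfix : ∀ a, x a.1 * (1 + ∑ b, Y b - Y a) = Y a := by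
    intro a
    have := hx a.1
    rw [hY]; simp only [Y]; field_simp; ring
  have hbound : ∀ a, headSum x k a ≤ Y a := by
    induction k with
    | zero => exact fun a => by rw [headSum_zero]; have := hx a.1; positivity
    | succ k ih =>
      intro a
      rw [headSum_succ, wordSum_eq_one_add_sum_headSum, ← hfix a, add_sub_assoc,
        add_sub_assoc, ← sum_erase_eq_sub (mem_univ a), ← sum_erase_eq_sub (mem_univ a)]
      gcongr with b
      · exact hx _
      · exact ih b
  calc wordSum x k = 1 + ∑ a, headSum x k a := wordSum_eq_one_add_sum_headSum x k
    _ ≤ 1 + ∑ a, Y a := by gcongr with a; exact hbound a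
    _ = (1 - 2 * T)⁻¹ := by rw [hY]; field_simp; ring

theorem add_one_le_wordSum {x : α → ℝ} (hx : ∀ i, 0 ≤ x i)
    (hT : 1 / 2 ≤ ∑ i, x i / (1 + x i)) (k : ℕ) : k + 1 ≤ wordSum x k := by
  induction k with
  | zero => rw [wordSum_eq_one_add_sum_headSum]; simp [headSum_zero]
  | succ k ih =>
    have hstep : ∀ a : α × Bool, x a.1 / (1 + x a.1) * wordSum x k ≤ headSum x (k + 1) a := by
      intro a
      have h1 := headSum_le_headSum_succ hx k a
      have h2 := headSum_succ x k a
      have := hx a.1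
      rw [div_mul_eq_mul_div, div_le_iff₀ (by positivity)]
      nlinarith
    have hW : 0 ≤ wordSum x k := by linarith
    calc ((k + 1 : ℕ) : ℝ) + 1 ≤ 2 * (∑ i, x i / (1 + x i)) * wordSum x k + 1 := by
          push_cast; nlinarith
      _ = 1 + ∑ a : α × Bool, x a.1 / (1 + x a.1) * wordSum x k := by
          rw [sum_comp_fst (fun i => x i / (1 + x i) * wordSum x k), ← sum_mul]; ring
      _ ≤ wordSum x (k + 1) := by
          rw [wordSum_eq_one_add_sum_headSum (k := k + 1)]
          exact add_le_add_right (sum_le_sum fun a _ => hstep a) 1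

end WordSums

/-- Abel summation against a counting function of exponential growth rate `t < s`. -/
theorem sum_exp_neg_mul_le {ι : Type*} (S : Finset ι) (ℓ : ι → ℝ) (hℓ : ∀ x ∈ S, 0 ≤ ℓ x)
    {C t s : ℝ} (hs : 0 ≤ s) (hts : t < s)
    (hC : ∀ j : ℕ, (#{x ∈ S | ℓ x < j + 1} : ℝ) ≤ C * exp (t * (j + 1))) :
    ∑ x ∈ S, exp (-(s * ℓ x)) ≤ C * exp t / (1 - exp (t - s)) := by
  have hC0 : 0 ≤ C := nonneg_of_mul_nonneg_left ((Nat.cast_nonneg _).trans (hC 0)) (exp_pos _)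
  have hq : exp (t - s) < 1 := exp_lt_one_iff.2 (by linarith)
  set J := S.sup fun x => ⌊ℓ x⌋₊
  have hmaps : ∀ x ∈ S, ⌊ℓ x⌋₊ ∈ range (J + 1) :=
    fun x hx => mem_range.2 (Nat.lt_succ_of_le (le_sup (f := fun x => ⌊ℓ x⌋₊) hx))
  have hfiber : ∀ j : ℕ, ∑ x ∈ S with ⌊ℓ x⌋₊ = j, exp (-(s * ℓ x)) ≤
      C * exp t * exp (t - s) ^ j := by
    intro j
    calc ∑ x ∈ S with ⌊ℓ x⌋₊ = j, exp (-(s * ℓ x))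
        ≤ ∑ x ∈ S with ℓ x < j + 1, exp (-(s * j)) := by
          refine sum_le_sum_of_subset_of_nonneg (fun x hx => ?_) (fun _ _ _ => (exp_pos _).le)
            |>.trans' (sum_le_sum fun x hx => ?_)
          · simp only [mem_filter] at hx ⊢
            exact ⟨hx.1, hx.2 ▸ Nat.lt_floor_add_one _⟩
          · simp only [mem_filter] at hx
            have : (j : ℝ) ≤ ℓ x := hx.2 ▸ Nat.floor_le (hℓ x hx.1)
            exact exp_le_exp.2 (by nlinarith)
      _ ≤ C * exp (t * (j + 1)) * exp (-(s * j)) := by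
          rw [sum_const, nsmul_eq_mul]; gcongr; exact hC j
      _ = C * exp t * exp (t - s) ^ j := by
          rw [← exp_nat_mul, mul_assoc, mul_assoc, ← exp_add, ← exp_add]; ring_nf
  calc ∑ x ∈ S, exp (-(s * ℓ x))
      = ∑ j ∈ range (J + 1), ∑ x ∈ S with ⌊ℓ x⌋₊ = j, exp (-(s * ℓ x)) :=
        (sum_fiberwise_of_maps_to hmaps _).symm
    _ ≤ ∑ j ∈ range (J + 1), C * exp t * exp (t - s) ^ j := sum_le_sum fun j _ => hfiber j
    _ ≤ C * exp t / (1 - exp (t - s)) := by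
        rw [← mul_sum, div_eq_mul_inv, range_eq_Ico]
        gcongr
        simpa using geom_sum_Ico_le_of_lt_one (exp_pos _).le hq (m := 0) (n := J + 1)

theorem limsup_log_div_eq {N : ℝ → ℝ} {σ : ℝ} (hN : ∀ᶠ R in atTop, 0 < N R)
    (hup : ∀ t, σ < t → ∃ C, ∀ᶠ R in atTop, N R ≤ C * exp (t * R))
    (hlow : ∀ t, t < σ → ∃ᶠ R in atTop, exp (t * R) ≤ N R) :
    limsup (fun R => log (N R) / R) atTop = σ := by
  have hle : ∀ a, σ < a → ∀ᶠ R in atTop, log (N R) / R ≤ a := by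
    intro a ha
    obtain ⟨C, hC⟩ := hup ((σ + a) / 2) (by linarith)
    have hsmall : ∀ᶠ R in atTop, log C / R ≤ (a - σ) / 2 :=
      (tendsto_const_nhds.div_atTop tendsto_id).eventually_le_const (by linarith)
    filter_upwards [hN, hC, hsmall, eventually_gt_atTop 0] with R hNR hCR hsR hR
    have hC0 : 0 < C := pos_of_mul_pos_left (hNR.trans_le hCR) (exp_pos _).le
    have : log (N R) ≤ log C + (σ + a) / 2 * R := by
      rw [← log_exp ((σ + a) / 2 * R), ← log_mul hC0.ne' (exp_pos _).ne']
      exact log_le_log hNR hCR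
    rw [div_le_iff₀ hR]
    rw [div_le_iff₀ hR] at hsR
    nlinarith
  have hge : ∀ t, t < σ → ∃ᶠ R in atTop, t ≤ log (N R) / R := by
    intro t ht
    refine ((hlow t ht).and_eventually (eventually_gt_atTop 0)).mono fun R ⟨hNR, hR⟩ => ?_
    rw [le_div_iff₀ hR, ← log_exp (t * R)]
    exact log_le_log (exp_pos _) hNR
  have hcobdd := IsCoboundedUnder.of_frequently_ge (hge (σ - 1) (by linarith))
  have hbdd := isBoundedUnder_of_eventually_le (hle (σ + 1) (by linarith))
  exact le_antisymm
    (le_of_forall_gt_imp_ge_of_dense fun a ha => limsup_le_of_le hcobdd (hle a ha))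
    (le_of_forall_lt_imp_le_of_dense fun t ht => le_limsup_of_frequently_le (hge t ht) hbdd)

theorem strictAnti_sum_comp_rpow {ι : Type*} [Fintype ι] [Nonempty ι] {u : ι → ℝ}
    (hu0 : ∀ i, 0 < u i) (hu1 : ∀ i, u i < 1) {f : ℝ → ℝ} (hf : StrictMonoOn f (Set.Ioi 0)) :
    StrictAnti fun s : ℝ => ∑ i, f (u i ^ s) := fun a b hab =>
  sum_lt_sum_of_nonempty univ_nonempty fun i _ =>
    hf (rpow_pos_of_pos (hu0 i) b) (rpow_pos_of_pos (hu0 i) a)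
      (rpow_lt_rpow_of_exponent_gt (hu0 i) (hu1 i) hab)

theorem strictMonoOn_div_one_add :
    StrictMonoOn (fun x : ℝ => x / (1 + x)) (Set.Ioi (-1)) := by
  intro a ha b hb hab
  simp only [Set.mem_Ioi] at ha hb
  rw [div_lt_div_iff₀ (by linarith) (by linarith)]
  nlinarith

theorem exists_pos_sum_rpow_eq {ι : Type*} [Fintype ι] [Nonempty ι] {u : ι → ℝ}
    (hu0 : ∀ i, 0 < u i) (hu1 : ∀ i, u i < 1) {a : ℝ} (ha0 : 0 < a) (ha1 : a < 1) :
    ∃ c : ℝ, 0 < c ∧ ∑ i, u i ^ c = a := by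
  set F : ℝ → ℝ := fun c => ∑ i, u i ^ c
  have hcont : Continuous F :=
    continuous_finsetSum _ fun i _ => continuous_const.rpow continuous_id fun _ =>
      Or.inl (hu0 i).ne'
  have hF0 : a < F 0 := by
    simpa [F] using ha1.trans_le (Nat.one_le_cast.2 Fintype.card_pos)
  have hlim : Tendsto F atTop (𝓝 0) := by
    simpa using tendsto_finsetSum univ fun i _ =>
      tendsto_rpow_atTop_of_base_lt_one (u i) (by linarith [hu0 i]) (hu1 i)
  obtain ⟨b, hFb, hb⟩ := ((hlim.eventually_lt_const ha0).and (eventually_ge_atTop 0)).exists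
  obtain ⟨c, ⟨hc0, -⟩, hc⟩ :=
    intermediate_value_Icc' hb hcont.continuousOn ⟨hFb.le, hF0.le⟩
  exact ⟨c, hc0.lt_of_ne (by rintro rfl; exact hF0.ne' hc), hc⟩

noncomputable section FreeGroupCounting

variable {α : Type*} [Fintype α] [DecidableEq α]

variable (α) in
def wordBall (k : ℕ) : Finset (FreeGroup α) := (reducedWords α k).image FreeGroup.mk

theorem mem_wordBall {k : ℕ} {g : FreeGroup α} : g ∈ wordBall α k ↔ g.toWord.length ≤ k := by
  simp only [wordBall, mem_image, mem_reducedWords]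
  constructor
  · rintro ⟨w, ⟨hlen, hred⟩, rfl⟩
    rwa [FreeGroup.toWord_mk, hred.reduce_eq]
  · exact fun h => ⟨g.toWord, ⟨h, FreeGroup.isReduced_toWord⟩, FreeGroup.mk_toWord⟩

theorem sum_wordBall (f : List (α × Bool) → ℝ) (k : ℕ) :
    ∑ g ∈ wordBall α k, f g.toWord = ∑ w ∈ reducedWords α k, f w := by
  have htoWord : ∀ w ∈ reducedWords α k, (FreeGroup.mk w).toWord = w := fun w hw => by
    rw [FreeGroup.toWord_mk, (mem_reducedWords.1 hw).2.reduce_eq]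
  rw [wordBall, sum_image fun v hv w hw h => by rw [← htoWord v hv, ← htoWord w hw, h]]
  exact sum_congr rfl fun w hw => by rw [htoWord w hw]

variable {n : ℕ} {r : Fin n → ℝ}

theorem sum_exp_neg_mul_wlen (hr : ∀ i, 0 < r i) (s : ℝ) (k : ℕ) :
    ∑ g ∈ wordBall (Fin n) k, exp (-(s * wlen r g)) = wordSum (fun i => r i ^ s) k := by
  have hexp : ∀ w : List (Fin n × Bool),
      exp (-(s * (w.map fun l => -log (r l.1)).sum)) = weight (fun i => r i ^ s) w := by
    intro w
    induction w with
    | nil => simp [weight]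
    | cons l w ih =>
      simp only [weight, List.map_cons, List.sum_cons, List.prod_cons] at ih ⊢
      rw [← ih, rpow_def_of_pos (hr _), ← exp_add]
      ring_nf
  exact sum_wordBall (fun w => exp (-(s * (w.map fun l => -log (r l.1)).sum))) k |>.trans
    (sum_congr rfl fun w _ => hexp w)

theorem mul_length_le_wlen {c : ℝ} (hc : ∀ i, c ≤ -log (r i)) (g : FreeGroup (Fin n)) :
    c * g.toWord.length ≤ wlen r g := by
  rw [wlen]
  induction g.toWord with
  | nil => simp
  | cons l w ih =>
    simp only [List.map_cons, List.sum_cons, List.length_cons]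
    push_cast
    linarith [hc l.1]

theorem wlen_nonneg (hr0 : ∀ i, 0 < r i) (hr1 : ∀ i, r i ≤ 1) (g : FreeGroup (Fin n)) :
    0 ≤ wlen r g := by
  simpa using mul_length_le_wlen (fun i => neg_nonneg.2 (log_nonpos (hr0 i).le (hr1 i))) g

theorem exists_pos_le_neg_log (hr0 : ∀ i, 0 < r i) (hr1 : ∀ i, r i < 1) :
    ∃ c > 0, ∀ i, c ≤ -log (r i) := by
  cases isEmpty_or_nonempty (Fin n)
  · exact ⟨1, one_pos, fun i => isEmptyElim i⟩
  · obtain ⟨i₀, hi₀⟩ := Finite.exists_min fun i => -log (r i)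
    exact ⟨_, neg_pos.2 (log_neg (hr0 i₀) (hr1 i₀)), hi₀⟩

theorem setOf_wlen_le_subset {c : ℝ} (hc : 0 < c) (hcr : ∀ i, c ≤ -log (r i)) (R : ℝ) :
    {g | wlen r g ≤ R} ⊆ wordBall (Fin n) ⌈R / c⌉₊ := fun g hg => by
  rw [mem_coe, mem_wordBall]
  have : (g.toWord.length : ℝ) ≤ R / c :=
    (le_div_iff₀' hc).2 ((mul_length_le_wlen hcr g).trans hg)
  exact_mod_cast this.trans (Nat.le_ceil _)

theorem finite_setOf_wlen_le (hr0 : ∀ i, 0 < r i) (hr1 : ∀ i, r i < 1) (R : ℝ) :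
    {g | wlen r g ≤ R}.Finite := by
  obtain ⟨c, hc, hcr⟩ := exists_pos_le_neg_log hr0 hr1
  exact (wordBall _ _).finite_toSet.subset (setOf_wlen_le_subset hc hcr R)

variable (r) in
def ballCard (R : ℝ) : ℕ := Nat.card {g : FreeGroup (Fin n) | wlen r g ≤ R}

theorem delta_eq_limsup : delta r = limsup (fun R => log (ballCard r R) / R) atTop := by
  simp only [delta, pexp, ballCard, Subgroup.mem_top, true_and]
  rfl

theorem ballCard_eq_card_filter {R : ℝ} {F : Finset (FreeGroup (Fin n))}
    (hF : {g | wlen r g ≤ R} ⊆ F) : ballCard r R = #{g ∈ F | wlen r g ≤ R} := by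
  rw [ballCard, ← Nat.card_eq_finsetCard]
  exact Nat.card_congr (Equiv.subtypeEquivRight fun g => by simpa using fun h => hF h)

theorem ballCard_pos (hr0 : ∀ i, 0 < r i) (hr1 : ∀ i, r i < 1) {R : ℝ} (hR : 0 ≤ R) :
    0 < ballCard r R := by
  obtain ⟨c, hc, hcr⟩ := exists_pos_le_neg_log hr0 hr1
  rw [ballCard_eq_card_filter (setOf_wlen_le_subset hc hcr R)]
  exact card_pos.2 ⟨1, mem_filter.2 ⟨mem_wordBall.2 (by simp), by simpa [wlen] using hR⟩⟩

theorem ballCard_le (hr0 : ∀ i, 0 < r i) (hr1 : ∀ i, r i < 1) {t : ℝ} (ht : 0 ≤ t)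
    (hT : ∑ i, r i ^ t / (1 + r i ^ t) < 1 / 2) (R : ℝ) :
    (ballCard r R : ℝ) ≤ (1 - 2 * ∑ i, r i ^ t / (1 + r i ^ t))⁻¹ * exp (t * R) := by
  obtain ⟨c, hc, hcr⟩ := exists_pos_le_neg_log hr0 hr1
  set F := wordBall (Fin n) ⌈R / c⌉₊
  rw [ballCard_eq_card_filter (setOf_wlen_le_subset hc hcr R), ← div_le_iff₀ (exp_pos _),
    div_eq_mul_inv, ← exp_neg]
  calc (#{g ∈ F | wlen r g ≤ R} : ℝ) * exp (-(t * R))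
      = ∑ g ∈ F with wlen r g ≤ R, exp (-(t * R)) := by rw [sum_const, nsmul_eq_mul]
    _ ≤ ∑ g ∈ F with wlen r g ≤ R, exp (-(t * wlen r g)) :=
        sum_le_sum fun g hg => exp_le_exp.2 (by nlinarith [(mem_filter.1 hg).2])
    _ ≤ ∑ g ∈ F, exp (-(t * wlen r g)) :=
        sum_le_sum_of_subset_of_nonneg (filter_subset _ _) fun _ _ _ => (exp_pos _).le
    _ ≤ _ := by
        rw [sum_exp_neg_mul_wlen hr0]
        exact wordSum_le (fun i => (rpow_pos_of_pos (hr0 i) t).le) hT _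

/-- If the ball sizes grew at a rate `t < s`, the partial Poincaré sums at exponent `s` would stay
bounded, while `add_one_le_wordSum` makes them diverge. -/
theorem frequently_exp_le_ballCard (hr0 : ∀ i, 0 < r i) (hr1 : ∀ i, r i < 1) {t s : ℝ}
    (ht : 0 ≤ t) (hts : t < s) (hT : 1 / 2 ≤ ∑ i, r i ^ s / (1 + r i ^ s)) :
    ∃ᶠ R in atTop, exp (t * R) ≤ ballCard r R := by
  intro h
  obtain ⟨R₁, hR₁⟩ := eventually_atTop.1 (h.and (eventually_ge_atTop 0))
  have hR₁0 : 0 ≤ R₁ := (hR₁ R₁ le_rfl).2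
  have hbound : ∀ k,
      wordSum (fun i => r i ^ s) k ≤ exp (t * R₁) * exp t / (1 - exp (t - s)) := by
    intro k
    rw [← sum_exp_neg_mul_wlen hr0]
    refine sum_exp_neg_mul_le _ _ (fun g _ => wlen_nonneg hr0 (fun i => (hr1 i).le) g)
      (ht.trans hts.le) hts fun j => ?_
    set R := max ((j : ℝ) + 1) R₁
    have hcard : #{g ∈ wordBall (Fin n) k | wlen r g < j + 1} ≤ ballCard r R := by
      rw [← Nat.card_eq_finsetCard]
      refine Nat.card_mono (finite_setOf_wlen_le hr0 hr1 R) fun g hg => ?_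
      exact (mem_filter.1 hg).2.le.trans (le_max_left _ _)
    calc (#{g ∈ wordBall (Fin n) k | wlen r g < j + 1} : ℝ)
        ≤ ballCard r R := by exact_mod_cast hcard
      _ ≤ exp (t * R) := (not_le.1 (hR₁ R (le_max_right _ _)).1).le
      _ ≤ exp (t * R₁) * exp (t * (j + 1)) := by
          have := max_le_add_of_nonneg (by positivity : (0 : ℝ) ≤ j + 1) hR₁0
          rw [← exp_add]
          exact exp_le_exp.2 (by nlinarith)
  obtain ⟨k, hk⟩ := exists_nat_gt (exp (t * R₁) * exp t / (1 - exp (t - s)))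
  linarith [hbound k,
    add_one_le_wordSum (fun i => (rpow_pos_of_pos (hr0 i) s).le) hT k]

theorem delta_eq (hr0 : ∀ i, 0 < r i) (hr1 : ∀ i, r i < 1) {σ : ℝ} (hσ : 0 < σ)
    (h : ∑ i, r i ^ σ / (1 + r i ^ σ) = 1 / 2) : delta r = σ := by
  have : Nonempty (Fin n) :=
    univ_nonempty_iff.1 (nonempty_of_sum_ne_zero (h.trans_ne (by norm_num)))
  have hanti := strictAnti_sum_comp_rpow hr0 hr1
    (strictMonoOn_div_one_add.mono (Set.Ioi_subset_Ioi (by norm_num)))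
  rw [delta_eq_limsup]
  refine limsup_log_div_eq ?_ (fun t ht => ?_) fun t ht => ?_
  · filter_upwards [eventually_ge_atTop 0] with R hR
    exact_mod_cast ballCard_pos hr0 hr1 hR
  · have hT : ∑ i, r i ^ t / (1 + r i ^ t) < 1 / 2 := by simpa only [h] using hanti ht
    exact ⟨_, Eventually.of_forall (ballCard_le hr0 hr1 (hσ.trans ht).le hT)⟩
  · refine (frequently_exp_le_ballCard hr0 hr1 (le_max_right t 0) (max_lt ht hσ) h.ge).mp ?_
    filter_upwards [eventually_ge_atTop 0] with R hR hle
    exact (exp_le_exp.2 (mul_le_mul_of_nonneg_right (le_max_left t 0) hR)).trans hle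

end FreeGroupCounting

theorem sqrt_sq_add_four_sub_div_two_spec {x v : ℝ} (hx : 0 < x)
    (hv : v = (sqrt (x ^ 2 + 4) - x) / 2) :
    0 < v ∧ v < 1 ∧ v ^ 2 + x * v = 1 := by
  subst hv
  have hsq : sqrt (x ^ 2 + 4) ^ 2 = x ^ 2 + 4 := sq_sqrt (by positivity)
  have hgt : x < sqrt (x ^ 2 + 4) := (lt_sqrt hx.le).2 (by linarith)
  have hlt : sqrt (x ^ 2 + 4) < x + 2 := (sqrt_lt' (by linarith)).2 (by nlinarith)
  exact ⟨by linarith, by linarith, by nlinarith⟩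

variable {n : ℕ} {p : Fin n → ℝ} {τ : ℝ}

theorem gam_eq (i : Fin n) : gam p τ i = (sqrt ((τ / p i) ^ 2 + 4) - τ / p i) / 2 := by
  simp only [gam, div_eq_mul_inv, mul_pow]

theorem gam_mem_Ioo (hp : ∀ i, 0 < p i) (hτ : 0 < τ) (i : Fin n) :
    gam p τ i ∈ Set.Ioo 0 1 := by
  obtain ⟨h0, h1, -⟩ := sqrt_sq_add_four_sub_div_two_spec (div_pos hτ (hp i)) (gam_eq i)
  exact ⟨h0, h1⟩

theorem div_sqrt_eq_gam (hp : ∀ i, 0 < p i) (hτ : 0 < τ) (i : Fin n) :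
    τ / sqrt (τ ^ 2 + 4 * p i ^ 2) = 1 - 2 * (gam p τ i ^ 2 / (1 + gam p τ i ^ 2)) := by
  set x := τ / p i
  set v := gam p τ i
  have hx : 0 < x := div_pos hτ (hp i)
  have hv_eq : v = (sqrt (x ^ 2 + 4) - x) / 2 := gam_eq i
  obtain ⟨hv0, -, hv⟩ := sqrt_sq_add_four_sub_div_two_spec hx hv_eq
  have hτx : τ = p i * x := (mul_div_cancel₀ τ (hp i).ne').symm
  have hsqrt : sqrt (τ ^ 2 + 4 * p i ^ 2) = p i * (2 * v + x) := by
    rw [hτx, show (p i * x) ^ 2 + 4 * p i ^ 2 = p i ^ 2 * (x ^ 2 + 4) by ring,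
      sqrt_mul (sq_nonneg _), sqrt_sq (hp i).le, hv_eq]
    ring
  have := hp i
  rw [hsqrt, div_eq_iff (by positivity)]
  field_simp
  linear_combination (1 + v ^ 2) * hτx + 2 * p i * v * hv

theorem hasDerivAt_sqrt_sq_add {a : ℝ} (ha : 0 < a) (τ : ℝ) :
    HasDerivAt (fun τ => sqrt (τ ^ 2 + a)) (τ / sqrt (τ ^ 2 + a)) τ := by
  have hpos : 0 < τ ^ 2 + a := by positivity
  convert ((hasDerivAt_pow 2 τ).add_const a).sqrt hpos.ne' using 1
  field_simp
  ring

theorem sum_div_sqrt_eq (hp : ∀ i, 0 < p i) {τ₀ : ℝ} (hτ₀ : 0 < τ₀)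
    (hmax : ∀ τ : ℝ, 0 < τ → τ ≠ τ₀ →
      1 - (∑ i, sqrt (τ ^ 2 + 4 * p i ^ 2)) + (n - 1) * τ <
        1 - (∑ i, sqrt (τ₀ ^ 2 + 4 * p i ^ 2)) + (n - 1) * τ₀) :
    ∑ i, τ₀ / sqrt (τ₀ ^ 2 + 4 * p i ^ 2) = n - 1 := by
  have hderiv : HasDerivAt (fun τ => 1 - (∑ i, sqrt (τ ^ 2 + 4 * p i ^ 2)) + (n - 1) * τ)
      (-(∑ i, τ₀ / sqrt (τ₀ ^ 2 + 4 * p i ^ 2)) + (n - 1)) τ₀ := by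
    have hsum := HasDerivAt.fun_sum fun i (_ : i ∈ univ) =>
      hasDerivAt_sqrt_sq_add (by have := hp i; positivity : 0 < 4 * p i ^ 2) τ₀
    have hlin : HasDerivAt (fun τ : ℝ => ((n : ℝ) - 1) * τ) ((n : ℝ) - 1) τ₀ := by
      simpa using (hasDerivAt_id τ₀).const_mul ((n : ℝ) - 1)
    exact (hsum.const_sub 1).add hlin
  have hloc :
      IsLocalMax (fun τ => 1 - (∑ i, sqrt (τ ^ 2 + 4 * p i ^ 2)) + (n - 1) * τ) τ₀ := by
    filter_upwards [Ioi_mem_nhds hτ₀] with τ hτ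
    rcases eq_or_ne τ τ₀ with rfl | hne
    · exact le_rfl
    · exact (hmax τ hτ hne).le
  linarith [hloc.hasDerivAt_eq_zero hderiv]

theorem sum_gam_sq_div_eq_half (hp : ∀ i, 0 < p i) {τ₀ : ℝ} (hτ₀ : 0 < τ₀)
    (hmax : ∀ τ : ℝ, 0 < τ → τ ≠ τ₀ →
      1 - (∑ i, sqrt (τ ^ 2 + 4 * p i ^ 2)) + (n - 1) * τ <
        1 - (∑ i, sqrt (τ₀ ^ 2 + 4 * p i ^ 2)) + (n - 1) * τ₀) :
    ∑ i, gam p τ₀ i ^ 2 / (1 + gam p τ₀ i ^ 2) = 1 / 2 := by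
  have h := sum_div_sqrt_eq hp hτ₀ hmax
  simp only [div_sqrt_eq_gam hp hτ₀, sum_sub_distrib, ← mul_sum, sum_const, card_univ,
    Fintype.card_fin, nsmul_eq_mul, mul_one] at h
  linarith

theorem eq_rpow_inv_of_Hmap_eq [Nonempty (Fin n)] {r u : Fin n → ℝ} {s : ℝ}
    (hr0 : ∀ i, 0 < r i) (hu1 : ∀ i, u i < 1) (h : Hmap r s = u) : r = fun i => u i ^ s⁻¹ := by
  have hs : s ≠ 0 := by
    rintro rfl
    obtain ⟨i⟩ := ‹Nonempty (Fin n)›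
    simpa [← h, Hmap] using hu1 i
  ext i
  rw [← h, Hmap, rpow_rpow_inv (hr0 i).le hs]

theorem Hmap_rpow_delta_half {u : Fin n → ℝ} (hu0 : ∀ i, 0 < u i) (hu1 : ∀ i, u i < 1) {c : ℝ}
    (hc : 0 < c) (h : ∑ i, u i ^ 2 / (1 + u i ^ 2) = 1 / 2) :
    Hmap (fun i => u i ^ c) (delta (fun i => u i ^ c) / 2) = u := by
  have hrpow : ∀ i (e : ℝ), (u i ^ c) ^ e = u i ^ (c * e) := fun i e =>
    (rpow_mul (hu0 i).le c e).symm
  have hδ : delta (fun i => u i ^ c) = 2 / c := by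
    refine delta_eq (fun i => rpow_pos_of_pos (hu0 i) c)
      (fun i => rpow_lt_one (hu0 i).le (hu1 i) hc) (by positivity) ?_
    simpa only [hrpow, mul_div_cancel₀ _ hc.ne', rpow_two] using h
  ext i
  rw [Hmap, hδ, hrpow, show c * (2 / c / 2) = 1 by field_simp, rpow_one]

end Cogrowth

theorem statement14_general (n : ℕ) (p : Fin n → ℝ) (hp : ∀ i, 0 < p i)
    (τ0 : ℝ) (hτ0 : 0 < τ0)
    (hmax : ∀ τ : ℝ, 0 < τ → τ ≠ τ0 →
      1 - (∑ i, Real.sqrt (τ ^ 2 + 4 * p i ^ 2)) + (n - 1) * τ <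
        1 - (∑ i, Real.sqrt (τ0 ^ 2 + 4 * p i ^ 2)) + (n - 1) * τ0) :
    ∃! r : Fin n → ℝ, (∀ i, 0 < r i) ∧ (∑ i, r i = 1 / 2) ∧
      Cogrowth.Hmap r (Cogrowth.delta r / 2) = Cogrowth.gam p τ0 := by
  set u := Cogrowth.gam p τ0
  have hu0 : ∀ i, 0 < u i := fun i => (Cogrowth.gam_mem_Ioo hp hτ0 i).1
  have hu1 : ∀ i, u i < 1 := fun i => (Cogrowth.gam_mem_Ioo hp hτ0 i).2
  have hcrit : ∑ i, u i ^ 2 / (1 + u i ^ 2) = 1 / 2 :=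
    Cogrowth.sum_gam_sq_div_eq_half hp hτ0 hmax
  have : Nonempty (Fin n) :=
    univ_nonempty_iff.1 (nonempty_of_sum_ne_zero (hcrit.trans_ne (by norm_num)))
  obtain ⟨c, hc0, hc⟩ :=
    Cogrowth.exists_pos_sum_rpow_eq hu0 hu1 (a := 1 / 2) (by norm_num) (by norm_num)
  refine ⟨fun i => u i ^ c, ⟨fun i => rpow_pos_of_pos (hu0 i) c, hc,
    Cogrowth.Hmap_rpow_delta_half hu0 hu1 hc0 hcrit⟩, fun r ⟨hr0, hrsum, hrH⟩ => ?_⟩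
  have hr := Cogrowth.eq_rpow_inv_of_Hmap_eq hr0 hu1 hrH
  rw [hr] at hrsum
  have hexp : (Cogrowth.delta r / 2)⁻¹ = c :=
    (Cogrowth.strictAnti_sum_comp_rpow hu0 hu1 strictMonoOn_id).injective (hrsum.trans hc.symm)
  rw [hr, hexp]

/-- at the maximum point `τ₀` of `λ(γ_{p₀}(τ))` there is a unique
`r₀ ∈ ℛ` with `H(r₀, δ(r₀)/2) = γ_{p₀}(τ₀)`. -/
theorem statement14 (n : ℕ) (hn : 2 ≤ n) (p : Fin n → ℝ) (hp : ∀ i, 0 < p i)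
    (hpsum : ∑ i, p i = 1 / 2) (τ0 : ℝ) (hτ0 : 0 < τ0)
    (hmax : ∀ τ : ℝ, 0 < τ → τ ≠ τ0 →
      1 - (∑ i, Real.sqrt (τ ^ 2 + 4 * p i ^ 2)) + (n - 1) * τ <
        1 - (∑ i, Real.sqrt (τ0 ^ 2 + 4 * p i ^ 2)) + (n - 1) * τ0) :
    ∃! r : Fin n → ℝ, (∀ i, 0 < r i) ∧ (∑ i, r i = 1 / 2) ∧
      Cogrowth.Hmap r (Cogrowth.delta r / 2) = Cogrowth.gam p τ0 :=
  statement14_general n p hp τ0 hτ0 hmax
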